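/- arXiv:1006.5580 — 5 statements merged into one kernel-verified Lean document; each statement's English description precedes it below -/
import Mathlib

section
/- Let X be a normed space, U ⊆ X open nonempty, Y a Banach space, and W a set of weights such that for each compact set K ⊆ U there exists f_K ∈ W with inf_{x∈K} |f_K(x)| > 0. Then the weighted function space C^0_W(U,Y) is complete. -/
open Filter Topology Set
open scoped ENNReal NNReal

noncomputable section

variable {X : Type*} [NormedAddCommGroup X] [NormedSpace ℝ X]

/-- The weighted seminorm `sup_{x ∈ U} |f x| · ‖D^(ℓ) γ (x)‖_op`, valued in `ℝ≥0∞`,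
where the weight `f` takes values in the extended real line. -/
def wSemi {Y : Type*} [NormedAddCommGroup Y] [NormedSpace ℝ Y]
    (U : Set X) (f : X → EReal) (ℓ : ℕ) (γ : X → Y) : ℝ≥0∞ :=
  ⨆ x ∈ U, (f x).abs * (‖iteratedFDeriv ℝ ℓ γ x‖₊ : ℝ≥0∞)

/-- Membership in the weighted function space `C^k_W(U, Y)`:  `γ` is `k` times continuously
Fréchet differentiable on `U` and all weighted seminorms up to order `k` are finite. -/
def MemCW {Y : Type*} [NormedAddCommGroup Y] [NormedSpace ℝ Y]
    (U : Set X) (W : Set (X → EReal)) (k : ℕ∞) (γ : X → Y) : Prop :=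
  ContDiffOn ℝ k γ U ∧ ∀ f ∈ W, ∀ ℓ : ℕ, (ℓ : ℕ∞) ≤ k → wSemi U f ℓ γ < ⊤

/-- The subbasic "balls" of the locally convex topology of `C^k_W(U, Y)` (taken inside the
ambient function space). -/
def wBalls (Y : Type*) [NormedAddCommGroup Y] [NormedSpace ℝ Y]
    (U : Set X) (W : Set (X → EReal)) (k : ℕ∞) : Set (Set (X → Y)) :=
  {S | ∃ (γ₀ : X → Y) (f : X → EReal) (ℓ : ℕ) (ε : ℝ≥0∞),
    f ∈ W ∧ (ℓ : ℕ∞) ≤ k ∧ 0 < ε ∧ S = {γ | wSemi U f ℓ (γ - γ₀) < ε}}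

/-- The locally convex topology determined by the weighted seminorms, on the ambient
function space; its restriction to the subtype of `C^k_W` functions is the topology of
`C^k_W(U, Y)`. -/
def wTop (Y : Type*) [NormedAddCommGroup Y] [NormedSpace ℝ Y]
    (U : Set X) (W : Set (X → EReal)) (k : ℕ∞) : TopologicalSpace (X → Y) :=
  .generateFrom (wBalls Y U W k)

/-!
A weight bounded below by `c > 0` on a compact `K ⊆ U` turns the weighted Cauchy condition
into a uniform Cauchy condition on `K`. Hence the Cauchy filter converges pointwise on `U` to
some `g`, uniformly on compact subsets of `U`, so `g` is continuous on every such compact set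
and therefore on the metrizable set `U`. Letting one of the two functions in the weighted
Cauchy estimate tend to `g` pointwise gives convergence to `g` in every weighted seminorm, and
the triangle inequality shows that the seminorms of `g` are finite.
-/

lemma continuousOn_of_forall_isCompact_subset {X Y : Type*} [TopologicalSpace X]
    [FirstCountableTopology X] [TopologicalSpace Y] {g : X → Y} {U : Set X}
    (h : ∀ K ⊆ U, IsCompact K → ContinuousOn g K) : ContinuousOn g U := by
  rw [continuousOn_iff_continuous_domRestrict]
  -- `U` is first countable, hence sequential, hence compactly generated.
  refine continuous_from_compactlyGeneratedSpace _ fun K _ _ _ p hp => ?_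
  have hK : IsCompact (range (Subtype.val ∘ p)) :=
    isCompact_range (continuous_subtype_val.comp hp)
  have hKU : range (Subtype.val ∘ p) ⊆ U := range_subset_iff.mpr fun k => (p k).2
  exact (h _ hKU hK).comp_continuous (continuous_subtype_val.comp hp) mem_range_self

lemma mul_enorm_le_of_tendsto {ι Y : Type*} [NormedAddCommGroup Y] {l : Filter ι} [l.NeBot]
    {F : ι → Y} {y : Y} (hF : Tendsto F l (𝓝 y)) {a ε : ℝ≥0∞}
    (h : ∀ᶠ i in l, a * ‖F i‖ₑ ≤ ε) : a * ‖y‖ₑ ≤ ε := by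
  -- `a * ·` is continuous at every nonzero point, also for `a = ⊤`.
  rcases eq_or_ne ‖y‖ₑ 0 with hy | hy
  · simp [hy]
  · exact le_of_tendsto (ENNReal.Tendsto.const_mul hF.enorm (Or.inl hy)) h

section WeightedSupSeminorm

variable {Y : Type*} [NormedAddCommGroup Y] [NormedSpace ℝ Y] {U : Set X} {f : X → EReal}

lemma wSemi_zero (g : X → Y) : wSemi U f 0 g = ⨆ x ∈ U, (f x).abs * ‖g x‖ₑ := by
  have h0 (x : X) : ‖iteratedFDeriv ℝ 0 g x‖₊ = ‖g x‖₊ :=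
    NNReal.eq norm_iteratedFDeriv_zero
  simp only [wSemi, enorm_eq_nnnorm, h0]

lemma le_wSemi_zero (g : X → Y) {x : X} (hx : x ∈ U) :
    (f x).abs * ‖g x‖ₑ ≤ wSemi U f 0 g := by
  rw [wSemi_zero]
  exact le_iSup₂ (f := fun x (_ : x ∈ U) => (f x).abs * ‖g x‖ₑ) x hx

lemma wSemi_zero_le {g : X → Y} {ε : ℝ≥0∞}
    (h : ∀ x ∈ U, (f x).abs * ‖g x‖ₑ ≤ ε) :
    wSemi U f 0 g ≤ ε := by
  rw [wSemi_zero]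
  exact iSup₂_le h

lemma wSemi_zero_sub_le (g h : X → Y) :
    wSemi U f 0 (g - h) ≤ wSemi U f 0 g + wSemi U f 0 h :=
  wSemi_zero_le fun x hx => calc
    (f x).abs * ‖g x - h x‖ₑ ≤ (f x).abs * ‖g x‖ₑ + (f x).abs * ‖h x‖ₑ := by
      rw [← mul_add]
      exact mul_le_mul_right enorm_sub_le _
    _ ≤ wSemi U f 0 g + wSemi U f 0 h := add_le_add (le_wSemi_zero g hx) (le_wSemi_zero h hx)

lemma wSemi_zero_lt_top_of_sub {g h : X → Y} (hg : wSemi U f 0 g < ⊤)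
    (hgh : wSemi U f 0 (g - h) < ⊤) : wSemi U f 0 h < ⊤ := by
  have := wSemi_zero_sub_le (U := U) (f := f) g (g - h)
  rw [sub_sub_cancel] at this
  exact this.trans_lt (ENNReal.add_lt_top.mpr ⟨hg, hgh⟩)

lemma edist_lt_of_wSemi_zero_sub_lt {g h : X → Y} {x : X} (hx : x ∈ U) {c ε : ℝ≥0∞}
    (hc : c ≤ (f x).abs) (hgh : wSemi U f 0 (g - h) < c * ε) : edist (g x) (h x) < ε := by
  rw [edist_eq_enorm_sub]
  refine lt_of_mul_lt_mul_left' (a := c) ?_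
  calc c * ‖g x - h x‖ₑ ≤ (f x).abs * ‖(g - h) x‖ₑ := mul_le_mul_left hc _
    _ ≤ wSemi U f 0 (g - h) := le_wSemi_zero _ hx
    _ < c * ε := hgh

variable {ι : Type*} {l : Filter ι} {F : ι → X → Y}

lemma uniformCauchySeqOn_of_wSemi_zero {K : Set X} (hKU : K ⊆ U) {c : ℝ≥0∞} (hc : 0 < c)
    (hcf : ∀ x ∈ K, c ≤ (f x).abs)
    (hF : ∀ ε > 0, ∃ s ∈ l, ∀ i ∈ s, ∀ j ∈ s, wSemi U f 0 (F i - F j) < ε) :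
    UniformCauchySeqOn F l K := by
  intro u hu
  obtain ⟨ε, hε, hεu⟩ := mem_uniformity_edist.mp hu
  obtain ⟨s, hs, hFs⟩ := hF (c * ε) (ENNReal.mul_pos hc.ne' hε.ne')
  filter_upwards [prod_mem_prod hs hs] with ij hij x hx
  exact hεu (edist_lt_of_wSemi_zero_sub_lt (hKU hx) (hcf x hx) (hFs _ hij.1 _ hij.2))

lemma wSemi_zero_sub_le_of_tendsto [l.NeBot] {g h : X → Y}
    (hg : ∀ x ∈ U, Tendsto (F · x) l (𝓝 (g x))) {ε : ℝ≥0∞}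
    (hh : ∀ᶠ i in l, wSemi U f 0 (h - F i) ≤ ε) : wSemi U f 0 (h - g) ≤ ε :=
  wSemi_zero_le fun x hx => mul_enorm_le_of_tendsto (tendsto_const_nhds.sub (hg x hx))
    (hh.mono fun _ hi => (le_wSemi_zero _ hx).trans hi)

lemma exists_mem_wSemi_zero_sub_lt [l.NeBot] {g : X → Y}
    (hg : ∀ x ∈ U, Tendsto (F · x) l (𝓝 (g x)))
    (hF : ∀ ε > 0, ∃ s ∈ l, ∀ i ∈ s, ∀ j ∈ s, wSemi U f 0 (F i - F j) < ε)
    {ε : ℝ≥0∞} (hε : 0 < ε) : ∃ s ∈ l, ∀ i ∈ s, wSemi U f 0 (F i - g) < ε := by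
  obtain ⟨δ, hδ, hδε⟩ := exists_between hε
  obtain ⟨s, hs, hFs⟩ := hF δ hδ
  refine ⟨s, hs, fun i hi => lt_of_le_of_lt ?_ hδε⟩
  exact wSemi_zero_sub_le_of_tendsto hg (eventually_of_mem hs fun j hj => (hFs i hi j hj).le)

end WeightedSupSeminorm

theorem stmt2_general {Y : Type*} [NormedAddCommGroup Y] [NormedSpace ℝ Y] [CompleteSpace Y]
    (U : Set X)
    (W : Set (X → EReal))
    (hW : ∀ K : Set X, K ⊆ U → IsCompact K →
      ∃ f ∈ W, ∃ c : ℝ≥0∞, 0 < c ∧ ∀ x ∈ K, c ≤ (f x).abs) :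
    ∀ l : Filter {γ : X → Y // MemCW U W 0 γ}, l.NeBot →
      (∀ f ∈ W, ∀ ε : ℝ≥0∞, 0 < ε →
        ∃ s ∈ l, ∀ γ ∈ s, ∀ η ∈ s, wSemi U f 0 (γ.1 - η.1) < ε) →
      ∃ γ₀ : {γ : X → Y // MemCW U W 0 γ},
        ∀ f ∈ W, ∀ ε : ℝ≥0∞, 0 < ε →
          ∃ s ∈ l, ∀ γ ∈ s, wSemi U f 0 (γ.1 - γ₀.1) < ε := by
  intro l _ hC
  let F : {γ : X → Y // MemCW U W 0 γ} → X → Y := Subtype.val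
  have hunif : ∀ K ⊆ U, IsCompact K → UniformCauchySeqOn F l K := by
    intro K hKU hK
    obtain ⟨f, hf, c, hc, hcf⟩ := hW K hKU hK
    exact uniformCauchySeqOn_of_wSemi_zero hKU hc hcf (hC f hf)
  let g : X → Y := fun x => limUnder l (F · x)
  have hg : ∀ x ∈ U, Tendsto (F · x) l (𝓝 (g x)) := fun x hx =>
    tendsto_nhds_limUnder <| CompleteSpace.complete <|
      (hunif {x} (singleton_subset_iff.mpr hx) isCompact_singleton).cauchy_map rfl
  have hcont : ContinuousOn g U := continuousOn_of_forall_isCompact_subset fun K hKU hK =>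
    ((hunif K hKU hK).tendstoUniformlyOn_of_tendsto fun x hx => hg x (hKU hx)).continuousOn <|
      Frequently.of_forall fun γ => (contDiffOn_zero.mp γ.2.1).mono hKU
  have hconv : ∀ f ∈ W, ∀ ε : ℝ≥0∞, 0 < ε →
      ∃ s ∈ l, ∀ γ ∈ s, wSemi U f 0 (F γ - g) < ε :=
    fun f hf _ hε => exists_mem_wSemi_zero_sub_lt hg (hC f hf) hε
  refine ⟨⟨g, contDiffOn_zero.mpr hcont, fun f hf ℓ hℓ => ?_⟩, hconv⟩
  obtain rfl : ℓ = 0 := by exact_mod_cast nonpos_iff_eq_zero.mp hℓ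
  obtain ⟨s, hs, hγs⟩ := hconv f hf 1 one_pos
  obtain ⟨γ, hγ⟩ := Filter.nonempty_of_mem hs
  exact wSemi_zero_lt_top_of_sub (γ.2.2 f hf 0 le_rfl) ((hγs γ hγ).trans ENNReal.one_lt_top)

/-- If `Y` is a Banach space and for every compact `K ⊆ U` some weight
`f_K ∈ W` is bounded away from `0` on `K`, then `C^0_W(U,Y)` is complete: every Cauchy
filter (for the weighted seminorm uniformity) converges in `C^0_W(U,Y)`. -/
theorem stmt2 {Y : Type*} [NormedAddCommGroup Y] [NormedSpace ℝ Y] [CompleteSpace Y]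
    (U : Set X) (hU : IsOpen U) (hne : U.Nonempty)
    (W : Set (X → EReal))
    (hW : ∀ K : Set X, K ⊆ U → IsCompact K →
      ∃ f ∈ W, ∃ c : ℝ≥0∞, 0 < c ∧ ∀ x ∈ K, c ≤ (f x).abs) :
    ∀ l : Filter {γ : X → Y // MemCW U W 0 γ}, l.NeBot →
      (∀ f ∈ W, ∀ ε : ℝ≥0∞, 0 < ε →
        ∃ s ∈ l, ∀ γ ∈ s, ∀ η ∈ s, wSemi U f 0 (γ.1 - η.1) < ε) →
      ∃ γ₀ : {γ : X → Y // MemCW U W 0 γ},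
        ∀ f ∈ W, ∀ ε : ℝ≥0∞, 0 < ε →
          ∃ s ∈ l, ∀ γ ∈ s, wSemi U f 0 (γ.1 - γ₀.1) < ε :=
  stmt2_general U W hW
end
end

section
/- Let X be a normed space, U ⊆ X open nonempty, Y a Banach space, k ∈ ℕ∪{∞}, and W a set of weights containing the constant function 1 on U. Then the weighted function space C^k_W(U,Y) is complete; in particular, the space BC^k(U,Y) of bounded C^k functions with bounded derivatives up to order k is complete. -/
open Filter Topology Set
open scoped ENNReal NNReal

noncomputable section

variable {X : Type*} [NormedAddCommGroup X] [NormedSpace ℝ X]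

/-! Weight `1` makes a Cauchy filter uniformly Cauchy on `U` in every derivative of order `≤ k`.
As `Y` is complete these derivatives converge uniformly on the open set `U`, and a uniform limit of
`C^k` functions whose derivatives converge uniformly is `C^k`, with the limits as derivatives.
Finally the weighted seminorms are lower semicontinuous under pointwise convergence of the
derivatives, so the Cauchy estimates survive the passage to the limit: this shows both that the
limit lies in `C^k_W(U, Y)` and that the filter converges to it. -/

section UniformLimits

variable {𝕜 : Type*} [NontriviallyNormedField 𝕜]
  {E F : Type*} [NormedAddCommGroup E] [NormedSpace 𝕜 E] [NormedAddCommGroup F] [NormedSpace 𝕜 F]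
  {ι : Type*} {l : Filter ι} {s : Set E} {n : ℕ∞} {f : ι → E → F}

theorem iteratedFDeriv_sub_apply_of_isOpen {m : ℕ} {g h : E → F} {x : E} (hs : IsOpen s)
    (hg : ContDiffOn 𝕜 m g s) (hh : ContDiffOn 𝕜 m h s) (hx : x ∈ s) :
    iteratedFDeriv 𝕜 m (g - h) x = iteratedFDeriv 𝕜 m g x - iteratedFDeriv 𝕜 m h x :=
  iteratedFDeriv_sub_apply (hg.contDiffAt (hs.mem_nhds hx)) (hh.contDiffAt (hs.mem_nhds hx))

variable [IsRCLikeNormedField 𝕜]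

theorem hasFTaylorSeriesUpToOn_of_tendstoUniformlyOn [l.NeBot] (hs : IsOpen s)
    (hf : ∀ i, ContDiffOn 𝕜 n (f i) s) {p : E → FormalMultilinearSeries 𝕜 E F}
    (hp : ∀ m : ℕ, (m : ℕ∞) ≤ n →
      TendstoUniformlyOn (fun i => iteratedFDeriv 𝕜 m (f i)) (fun x => p x m) l s) :
    HasFTaylorSeriesUpToOn n (fun x => (p x 0).curry0) p s := by
  refine ⟨fun x _ => rfl, fun m hm x hx => ?_, fun m hm => ?_⟩
  · have hm' : (m : ℕ∞) < n := mod_cast hm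
    have hderiv : ∀ i, ∀ y ∈ s, HasFDerivAt (iteratedFDeriv 𝕜 m (f i))
        (continuousMultilinearCurryLeftEquiv 𝕜 (fun _ : Fin (m + 1) => E) F
          (iteratedFDeriv 𝕜 (m + 1) (f i) y)) y :=
      fun i y hy => (((hf i).contDiffAt (hs.mem_nhds hy)).differentiableAt_iteratedFDeriv
        (mod_cast hm')).hasFDerivAt
    have hcurry := (continuousMultilinearCurryLeftEquiv 𝕜 (fun _ : Fin (m + 1) => E)
      F).isometry.uniformContinuous.comp_tendstoUniformlyOn
        (hp (m + 1) (mod_cast Order.add_one_le_of_lt hm'))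
    exact (hasFDerivAt_of_tendstoUniformlyOn hs hcurry hderiv
      (fun y hy => (hp m hm'.le).tendsto_at hy) hx).hasFDerivWithinAt
  · have hm' : (m : ℕ∞) ≤ n := mod_cast hm
    exact (hp m hm').continuousOn (Frequently.of_forall fun i =>
      ContinuousOn.continuousOn_iteratedFDeriv (hf i) hs (mod_cast hm'))

theorem exists_contDiffOn_tendstoUniformlyOn_iteratedFDeriv [CompleteSpace F] [l.NeBot]
    (hs : IsOpen s) (hf : ∀ i, ContDiffOn 𝕜 n (f i) s)
    (hcau : ∀ m : ℕ, (m : ℕ∞) ≤ n → UniformCauchySeqOn (fun i => iteratedFDeriv 𝕜 m (f i)) l s) :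
    ∃ g : E → F, ContDiffOn 𝕜 n g s ∧ ∀ m : ℕ, (m : ℕ∞) ≤ n →
      TendstoUniformlyOn (fun i => iteratedFDeriv 𝕜 m (f i)) (iteratedFDeriv 𝕜 m g) l s := by
  let p : E → FormalMultilinearSeries 𝕜 E F := fun x m =>
    limUnder l fun i => iteratedFDeriv 𝕜 m (f i) x
  have hp : ∀ m : ℕ, (m : ℕ∞) ≤ n →
      TendstoUniformlyOn (fun i => iteratedFDeriv 𝕜 m (f i)) (fun x => p x m) l s :=
    fun m hm => (hcau m hm).tendstoUniformlyOn_of_tendsto fun x hx =>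
      tendsto_nhds_limUnder (cauchy_map_iff_exists_tendsto.1 ((hcau m hm).cauchy_map hx))
  have hT := hasFTaylorSeriesUpToOn_of_tendstoUniformlyOn hs hf hp
  refine ⟨_, hT.contDiffOn, fun m hm => (hp m hm).congr_right fun x hx => ?_⟩
  dsimp only
  rw [hT.eq_iteratedFDerivWithin_of_uniqueDiffOn (mod_cast hm) hs.uniqueDiffOn hx,
    iteratedFDerivWithin_of_isOpen m hs hx]

end UniformLimits

theorem ENNReal.mul_le_of_tendsto {ι : Type*} {l : Filter ι} [l.NeBot] {m : ι → ℝ≥0∞}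
    {a b M : ℝ≥0∞} (hm : Tendsto m l (𝓝 b)) (h : ∀ᶠ i in l, a * m i ≤ M) : a * b ≤ M := by
  rcases eq_or_ne b 0 with rfl | hb
  · simp
  · exact le_of_tendsto (ENNReal.Tendsto.const_mul hm (Or.inl hb)) h

section WeightedSeminorm

variable {Y : Type*} [NormedAddCommGroup Y] [NormedSpace ℝ Y] {U : Set X} {f : X → EReal}
  {ℓ : ℕ} {γ η : X → Y}

theorem le_wSemi {x : X} (hx : x ∈ U) :
    (f x).abs * (‖iteratedFDeriv ℝ ℓ γ x‖₊ : ℝ≥0∞) ≤ wSemi U f ℓ γ :=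
  le_iSup₂ (f := fun x (_ : x ∈ U) => (f x).abs * (‖iteratedFDeriv ℝ ℓ γ x‖₊ : ℝ≥0∞)) x hx

theorem enorm_iteratedFDeriv_le_wSemi_one {x : X} (hx : x ∈ U) :
    ‖iteratedFDeriv ℝ ℓ γ x‖ₑ ≤ wSemi U (fun _ => 1) ℓ γ := by
  have habs : (1 : EReal).abs = 1 := by simpa using EReal.abs_def 1
  simpa only [habs, one_mul, enorm_eq_nnnorm] using
    le_wSemi (f := fun _ => (1 : EReal)) (ℓ := ℓ) (γ := γ) hx

theorem wSemi_sub_le (hU : IsOpen U) (hγ : ContDiffOn ℝ ℓ γ U) (hη : ContDiffOn ℝ ℓ η U) :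
    wSemi U f ℓ (γ - η) ≤ wSemi U f ℓ γ + wSemi U f ℓ η := by
  refine iSup₂_le fun x hx => ?_
  rw [iteratedFDeriv_sub_apply_of_isOpen hU hγ hη hx]
  calc (f x).abs * (‖iteratedFDeriv ℝ ℓ γ x - iteratedFDeriv ℝ ℓ η x‖₊ : ℝ≥0∞)
      ≤ (f x).abs * (‖iteratedFDeriv ℝ ℓ γ x‖₊ + ‖iteratedFDeriv ℝ ℓ η x‖₊ : ℝ≥0∞) := by
        gcongr
        exact_mod_cast nnnorm_sub_le _ _
    _ ≤ wSemi U f ℓ γ + wSemi U f ℓ η := by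
        rw [mul_add]
        exact add_le_add (le_wSemi hx) (le_wSemi hx)

theorem wSemi_le_of_tendsto {ι : Type*} {l : Filter ι} [l.NeBot] {F : ι → X → Y} {M : ℝ≥0∞}
    (hlim : ∀ x ∈ U,
      Tendsto (fun i => iteratedFDeriv ℝ ℓ (F i) x) l (𝓝 (iteratedFDeriv ℝ ℓ γ x)))
    (hM : ∀ᶠ i in l, wSemi U f ℓ (F i) ≤ M) : wSemi U f ℓ γ ≤ M :=
  iSup₂_le fun x hx => ENNReal.mul_le_of_tendsto (ENNReal.tendsto_coe.2 (hlim x hx).nnnorm)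
    (hM.mono fun _ hi => (le_wSemi hx).trans hi)

theorem wSemi_sub_le_of_tendsto {ι : Type*} {l : Filter ι} [l.NeBot] {F : ι → X → Y}
    (hU : IsOpen U) (hF : ∀ i, ContDiffOn ℝ ℓ (F i) U) (hγ : ContDiffOn ℝ ℓ γ U)
    (hlim : ∀ x ∈ U,
      Tendsto (fun i => iteratedFDeriv ℝ ℓ (F i) x) l (𝓝 (iteratedFDeriv ℝ ℓ γ x)))
    {s : Set ι} (hs : s ∈ l) {δ : ℝ≥0∞} (hδ : ∀ i ∈ s, ∀ j ∈ s, wSemi U f ℓ (F i - F j) ≤ δ)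
    {i : ι} (hi : i ∈ s) : wSemi U f ℓ (F i - γ) ≤ δ := by
  refine wSemi_le_of_tendsto (F := fun j => F i - F j) (fun x hx => ?_)
    (eventually_of_mem hs (hδ i hi))
  have hsub : (fun j => iteratedFDeriv ℝ ℓ (F i - F j) x) =
      fun j => iteratedFDeriv ℝ ℓ (F i) x - iteratedFDeriv ℝ ℓ (F j) x :=
    funext fun j => iteratedFDeriv_sub_apply_of_isOpen hU (hF i) (hF j) hx
  rw [hsub, iteratedFDeriv_sub_apply_of_isOpen hU (hF i) hγ hx]
  exact tendsto_const_nhds.sub (hlim x hx)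

theorem uniformCauchySeqOn_iteratedFDeriv_of_wSemi_one {ι : Type*} {l : Filter ι}
    {F : ι → X → Y} (hU : IsOpen U) (hF : ∀ i, ContDiffOn ℝ ℓ (F i) U)
    (hcau : ∀ ε : ℝ≥0∞, 0 < ε →
      ∃ s ∈ l, ∀ i ∈ s, ∀ j ∈ s, wSemi U (fun _ => 1) ℓ (F i - F j) < ε) :
    UniformCauchySeqOn (fun i => iteratedFDeriv ℝ ℓ (F i)) l U := by
  intro u hu
  obtain ⟨ε, hε, hεu⟩ := mem_uniformity_edist.1 hu
  obtain ⟨s, hs, hsub⟩ := hcau ε hε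
  filter_upwards [prod_mem_prod hs hs] with ⟨i, j⟩ ⟨hi, hj⟩ x hx
  refine hεu ?_
  rw [edist_eq_enorm_sub, ← iteratedFDeriv_sub_apply_of_isOpen hU (hF i) (hF j) hx]
  exact (enorm_iteratedFDeriv_le_wSemi_one hx).trans_lt (hsub i hi j hj)

end WeightedSeminorm

theorem MemCW.contDiffOn_of_le {Y : Type*} [NormedAddCommGroup Y] [NormedSpace ℝ Y] {U : Set X}
    {W : Set (X → EReal)} {k : ℕ∞} {γ : X → Y} (hγ : MemCW U W k γ) {ℓ : ℕ} (hℓ : (ℓ : ℕ∞) ≤ k) :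
    ContDiffOn ℝ ℓ γ U :=
  hγ.1.of_le (mod_cast hℓ)

theorem stmt3_general {Y : Type*} [NormedAddCommGroup Y] [NormedSpace ℝ Y] [CompleteSpace Y]
    (U : Set X) (hU : IsOpen U)
    (W : Set (X → EReal)) (k : ℕ∞)
    (h1 : (fun _ : X => (1 : EReal)) ∈ W) :
    ∀ l : Filter {γ : X → Y // MemCW U W k γ}, l.NeBot →
      (∀ f ∈ W, ∀ ℓ : ℕ, (ℓ : ℕ∞) ≤ k → ∀ ε : ℝ≥0∞, 0 < ε →
        ∃ s ∈ l, ∀ γ ∈ s, ∀ η ∈ s, wSemi U f ℓ (γ.1 - η.1) < ε) →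
      ∃ γ₀ : {γ : X → Y // MemCW U W k γ},
        ∀ f ∈ W, ∀ ℓ : ℕ, (ℓ : ℕ∞) ≤ k → ∀ ε : ℝ≥0∞, 0 < ε →
          ∃ s ∈ l, ∀ γ ∈ s, wSemi U f ℓ (γ.1 - γ₀.1) < ε := by
  intro l hl hcau
  have hUC : ∀ ℓ : ℕ, (ℓ : ℕ∞) ≤ k →
      UniformCauchySeqOn (fun γ : {γ // MemCW U W k γ} => iteratedFDeriv ℝ ℓ γ.1) l U :=
    fun ℓ hℓ => uniformCauchySeqOn_iteratedFDeriv_of_wSemi_one hU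
      (fun γ => γ.2.contDiffOn_of_le hℓ) (hcau _ h1 ℓ hℓ)
  obtain ⟨g, hg, hlim⟩ := exists_contDiffOn_tendstoUniformlyOn_iteratedFDeriv hU
    (fun γ => γ.2.1) hUC
  have hclose : ∀ f ∈ W, ∀ ℓ : ℕ, (ℓ : ℕ∞) ≤ k → ∀ δ : ℝ≥0∞, 0 < δ →
      ∃ s ∈ l, ∀ γ ∈ s, wSemi U f ℓ (γ.1 - g) ≤ δ := by
    intro f hf ℓ hℓ δ hδ
    obtain ⟨s, hs, hsub⟩ := hcau f hf ℓ hℓ δ hδ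
    exact ⟨s, hs, fun γ hγ => wSemi_sub_le_of_tendsto hU (fun η => η.2.contDiffOn_of_le hℓ)
      (hg.of_le (mod_cast hℓ)) (fun x hx => (hlim ℓ hℓ).tendsto_at hx) hs
      (fun γ hγ η hη => (hsub γ hγ η hη).le) hγ⟩
  have hg_mem : MemCW U W k g := by
    refine ⟨hg, fun f hf ℓ hℓ => ?_⟩
    obtain ⟨s, hs, hsub⟩ := hclose f hf ℓ hℓ 1 one_pos
    obtain ⟨η, hη⟩ := l.nonempty_of_mem hs
    calc wSemi U f ℓ g = wSemi U f ℓ (η.1 - (η.1 - g)) := by rw [sub_sub_cancel]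
      _ ≤ wSemi U f ℓ η.1 + wSemi U f ℓ (η.1 - g) :=
        wSemi_sub_le hU (η.2.contDiffOn_of_le hℓ)
          ((η.2.contDiffOn_of_le hℓ).sub (hg.of_le (mod_cast hℓ)))
      _ < ⊤ := ENNReal.add_lt_top.2 ⟨η.2.2 f hf ℓ hℓ, (hsub η hη).trans_lt ENNReal.one_lt_top⟩
  refine ⟨⟨g, hg_mem⟩, fun f hf ℓ hℓ ε hε => ?_⟩
  obtain ⟨δ, hδ, hδε⟩ := exists_between hε
  obtain ⟨s, hs, hsub⟩ := hclose f hf ℓ hℓ δ hδ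
  exact ⟨s, hs, fun γ hγ => (hsub γ hγ).trans_lt hδε⟩

/-- If `Y` is a Banach space, `k ∈ ℕ∪{∞}` and the set of weights `W` contains
the constant function `1` on `U`, then `C^k_W(U,Y)` is complete: every Cauchy filter for the
weighted seminorm uniformity converges.  (In particular `BC^k(U,Y)`, the case `W = {1_U}`,
is complete.) -/
theorem stmt3 {Y : Type*} [NormedAddCommGroup Y] [NormedSpace ℝ Y] [CompleteSpace Y]
    (U : Set X) (hU : IsOpen U) (hne : U.Nonempty)
    (W : Set (X → EReal)) (k : ℕ∞)
    (h1 : (fun _ : X => (1 : EReal)) ∈ W) :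
    ∀ l : Filter {γ : X → Y // MemCW U W k γ}, l.NeBot →
      (∀ f ∈ W, ∀ ℓ : ℕ, (ℓ : ℕ∞) ≤ k → ∀ ε : ℝ≥0∞, 0 < ε →
        ∃ s ∈ l, ∀ γ ∈ s, ∀ η ∈ s, wSemi U f ℓ (γ.1 - η.1) < ε) →
      ∃ γ₀ : {γ : X → Y // MemCW U W k γ},
        ∀ f ∈ W, ∀ ℓ : ℕ, (ℓ : ℕ∞) ≤ k → ∀ ε : ℝ≥0∞, 0 < ε →
          ∃ s ∈ l, ∀ γ ∈ s, wSemi U f ℓ (γ.1 - γ₀.1) < ε :=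
  stmt3_general U hU W k h1
end
end

section
/- Let E and F be Banach spaces and φ ∈ FC^1(E,F) such that Dφ(x) is invertible for every x ∈ E and there exists K ∈ ℝ with ‖Dφ(x)^{-1}‖_op ≤ K for all x ∈ E. Then φ is a surjective homeomorphism from E onto F. -/
/-!
By the inverse function theorem `φ` is a local homeomorphism. The bound `‖Dφ(x)⁻¹‖ ≤ K` makes
every lift of a ray `t ↦ φ x₀ + t • v` through `φ` Lipschitz with constant `K * ‖v‖`, so by
completeness of `E` a lift defined on `[0, T)` converges at `T` and continues past `T` through a
chart: every ray lifts on `[0, 1]`. Lifting the ray from `φ 0` to `y` gives surjectivity.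

If `φ a = φ b`, lift for each point `c s` of the segment `[a, b]` the ray from `φ (c s)` to `φ b`.
By the homotopy lifting argument these lifts depend continuously on `s`; their endpoints all lie
over `φ b`, hence coincide. At `s = 0` and `s = 1` the lifted path is constant, so `a = b`.
-/

open Set Filter Topology unitInterval

theorem isLocalHomeomorph_of_hasStrictFDerivAt {𝕜 E F : Type*} [NontriviallyNormedField 𝕜]
    [NormedAddCommGroup E] [NormedSpace 𝕜 E] [CompleteSpace E]
    [NormedAddCommGroup F] [NormedSpace 𝕜 F] {φ : E → F}
    (hφ : ∀ x, ∃ e : E ≃L[𝕜] F, HasStrictFDerivAt φ (e : E →L[𝕜] F) x) :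
    IsLocalHomeomorph φ := fun x => by
  obtain ⟨e, he⟩ := hφ x
  exact ⟨he.toOpenPartialHomeomorph φ, he.mem_toOpenPartialHomeomorph_source, rfl⟩

theorem UniformContinuousOn.exists_tendsto_nhdsWithin {α β : Type*} [UniformSpace α]
    [UniformSpace β] [CompleteSpace β] {f : α → β} {s : Set α} {a : α}
    (hf : UniformContinuousOn f s) (ha : a ∈ closure s) : ∃ b, Tendsto f (𝓝[s] a) (𝓝 b) :=
  haveI := mem_closure_iff_nhdsWithin_neBot.1 ha
  CompleteSpace.complete ((cauchy_nhds.mono' this nhdsWithin_le_nhds).map_of_le hf inf_le_right)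

theorem HasStrictFDerivAt.hasDerivWithinAt_of_comp_eq {E F : Type*}
    [NormedAddCommGroup E] [NormedSpace ℝ E] [CompleteSpace E]
    [NormedAddCommGroup F] [NormedSpace ℝ F] {φ : E → F} {e : E ≃L[ℝ] F} {γ : ℝ → E}
    {p : ℝ → F} {p' : F} {s : Set ℝ} {t : ℝ} (he : HasStrictFDerivAt φ (e : E →L[ℝ] F) (γ t))
    (hγ : ContinuousWithinAt γ s t) (hp : HasDerivWithinAt p p' s t)
    (hlift : ∀ r ∈ s, φ (γ r) = p r) (ht : t ∈ s) :
    HasDerivWithinAt γ (e.symm p') s t := by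
  have hinv : HasFDerivAt (he.localInverse φ e (γ t)) (e.symm : F →L[ℝ] E) (p t) := by
    rw [← hlift t ht]
    exact he.to_localInverse.hasFDerivAt
  refine (hinv.comp_hasDerivWithinAt t hp).congr_of_eventuallyEq ?_ ?_
  · filter_upwards [hγ.eventually he.eventually_left_inverse, self_mem_nhdsWithin] with r hr hrs
    rw [Function.comp_apply, ← hlift r hrs, hr]
  · rw [Function.comp_apply, ← hlift t ht, he.localInverse_apply_image]

def IsRayLift {E F : Type*} [TopologicalSpace E] [AddCommGroup F] [Module ℝ F] (φ : E → F)
    (x₀ : E) (v : F) (T : ℝ) (γ : ℝ → E) : Prop :=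
  ContinuousOn γ (Icc 0 T) ∧ γ 0 = x₀ ∧ ∀ t ∈ Icc 0 T, φ (γ t) = φ x₀ + t • v

namespace IsRayLift

section Topological

variable {E F : Type*} [TopologicalSpace E] [NormedAddCommGroup F] [NormedSpace ℝ F]
  {φ : E → F} {x₀ : E} {v : F} {t T : ℝ} {γ γ₁ γ₂ : ℝ → E}

theorem mono (h : IsRayLift φ x₀ v T γ) (htT : t ≤ T) : IsRayLift φ x₀ v t γ :=
  ⟨h.1.mono (Icc_subset_Icc_right htT), h.2.1,
    fun r hr => h.2.2 r (Icc_subset_Icc_right htT hr)⟩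

theorem eqOn [T2Space E] (hφ : IsLocalHomeomorph φ) (h₁ : IsRayLift φ x₀ v T γ₁)
    (h₂ : IsRayLift φ x₀ v T γ₂) : EqOn γ₁ γ₂ (Icc 0 T) := by
  rcases lt_or_ge T 0 with hT | hT
  · simp [Icc_eq_empty_of_lt hT]
  exact (T2Space.isSeparatedMap φ).eqOn_of_comp_eqOn hφ.isLocallyInjective isPreconnected_Icc
    h₁.1 h₂.1 (fun r hr => (h₁.2.2 r hr).trans (h₂.2.2 r hr).symm) (left_mem_Icc.2 hT)
    (h₁.2.1.trans h₂.2.1.symm)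

theorem extend (h : IsRayLift φ x₀ v t γ) (ht : 0 ≤ t) (Φ : OpenPartialHomeomorph E F)
    (hΦ : φ = Φ) (hsource : γ t ∈ Φ.source)
    (htarget : ∀ r ∈ Icc t T, φ x₀ + r • v ∈ Φ.target) :
    IsRayLift φ x₀ v T (fun r => if r ≤ t then γ r else Φ.symm (φ x₀ + r • v)) := by
  have hglue : Φ.symm (φ x₀ + t • v) = γ t := by
    rw [← h.2.2 t ⟨ht, le_rfl⟩, hΦ, Φ.left_inv hsource]
  refine ⟨?_, by simp [ht, h.2.1], fun r hr => ?_⟩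
  · have hleft : ContinuousOn (fun r => if r ≤ t then γ r else Φ.symm (φ x₀ + r • v))
        (Icc 0 t) := h.1.congr fun r hr => if_pos hr.2
    have hright : ContinuousOn (fun r => if r ≤ t then γ r else Φ.symm (φ x₀ + r • v))
        (Icc t T) := by
      refine (Φ.continuousOn_symm.comp (by fun_prop) fun r hr => htarget r hr).congr
        fun r hr => ?_
      split_ifs with hrt
      · rw [le_antisymm hrt hr.1]
        exact hglue.symm
      · rfl
    exact (hleft.union_of_isClosed hright isClosed_Icc isClosed_Icc).mono
      Icc_subset_Icc_union_Icc
  · dsimp only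
    split_ifs with hrt
    · exact h.2.2 r ⟨hr.1, hrt⟩
    · nth_rw 1 [hΦ]
      exact Φ.right_inv (htarget r ⟨(not_le.1 hrt).le, hr.2⟩)

end Topological

end IsRayLift

section Normed

variable {E F : Type*} [NormedAddCommGroup E] [NormedSpace ℝ E] [CompleteSpace E]
  [NormedAddCommGroup F] [NormedSpace ℝ F] {φ : E → F} {K : ℝ}

theorem IsRayLift.lipschitzOnWith
    (hφ : ∀ x, ∃ e : E ≃L[ℝ] F, HasStrictFDerivAt φ (e : E →L[ℝ] F) x ∧
      ‖(e.symm : F →L[ℝ] E)‖ ≤ K)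
    {x₀ : E} {v : F} {T : ℝ} {γ : ℝ → E} (h : IsRayLift φ x₀ v T γ) :
    LipschitzOnWith (K * ‖v‖).toNNReal γ (Icc 0 T) := by
  choose e he heK using hφ
  refine (convex_Icc 0 T).lipschitzOnWith_of_nnnorm_hasDerivWithin_le
    (f' := fun t => (e (γ t)).symm v) (fun t ht => ?_) fun t _ => ?_
  · refine (he (γ t)).hasDerivWithinAt_of_comp_eq (h.1 t ht) ?_ h.2.2 ht
    simpa using (((hasDerivAt_id t).smul_const v).const_add (φ x₀)).hasDerivWithinAt
  · rw [← norm_toNNReal]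
    exact Real.toNNReal_le_toNNReal <|
      ((e (γ t)).symm.toContinuousLinearMap.le_opNorm v).trans
        (mul_le_mul_of_nonneg_right (heK _) (norm_nonneg v))

theorem exists_isRayLift
    (hφ : ∀ x, ∃ e : E ≃L[ℝ] F, HasStrictFDerivAt φ (e : E →L[ℝ] F) x ∧
      ‖(e.symm : F →L[ℝ] E)‖ ≤ K)
    (x₀ : E) (v : F) (T : ℝ) : ∃ γ, IsRayLift φ x₀ v T γ := by
  have hloc := isLocalHomeomorph_of_hasStrictFDerivAt fun x => (hφ x).imp fun _ => And.left
  have hray : Continuous fun r : ℝ => φ x₀ + r • v := by fun_prop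
  set S := {t : ℝ | 0 ≤ t ∧ ∃ γ, IsRayLift φ x₀ v t γ}
  by_contra hno_lift
  have hS : BddAbove S :=
    ⟨T, fun t ⟨_, γ, hγ⟩ => le_of_not_gt fun htT => hno_lift ⟨γ, hγ.mono htT.le⟩⟩
  have h0S : (0 : ℝ) ∈ S := ⟨le_rfl, fun _ => x₀, continuousOn_const, rfl, fun r hr => by
    simp [le_antisymm hr.2 hr.1]⟩
  choose! γ hγ using fun t (ht : t ∈ S) => ht.2
  have hlip : LipschitzOnWith (K * ‖v‖).toNNReal (fun t => γ t t) S := by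
    refine LipschitzOnWith.of_dist_le_mul fun s hs t ht => ?_
    wlog hst : s ≤ t generalizing s t
    · rw [dist_comm, dist_comm s]
      exact this t ht s hs (le_of_not_ge hst)
    rw [(hγ s hs).eqOn hloc ((hγ t ht).mono hst) ⟨hs.1, le_rfl⟩]
    exact ((hγ t ht).lipschitzOnWith hφ).dist_le_mul s ⟨hs.1, hst⟩ t ⟨ht.1, le_rfl⟩
  set T₀ := sSup S
  have hT₀ : T₀ ∈ closure S := csSup_mem_closure ⟨0, h0S⟩ hS
  have := mem_closure_iff_nhdsWithin_neBot.1 hT₀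
  obtain ⟨x, hx⟩ := hlip.uniformContinuousOn.exists_tendsto_nhdsWithin hT₀
  have hφx : φ x = φ x₀ + T₀ • v := by
    refine tendsto_nhds_unique (((hloc.continuous.tendsto x).comp hx).congr' ?_)
      (hray.continuousAt.mono_left nhdsWithin_le_nhds)
    filter_upwards [self_mem_nhdsWithin] with t ht using (hγ t ht).2.2 t ⟨ht.1, le_rfl⟩
  obtain ⟨Φ, hxΦ, hΦ⟩ := hloc x
  obtain ⟨ε, hε, hball⟩ : ∃ ε > 0, ∀ r, dist r T₀ < ε → φ x₀ + r • v ∈ Φ.target := by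
    refine Metric.eventually_nhds_iff.1 (hray.continuousAt.eventually_mem
      (Φ.open_target.mem_nhds ?_))
    rw [← hφx, hΦ]
    exact Φ.map_source hxΦ
  obtain ⟨t, ⟨htS, htε⟩, hγt⟩ : ∃ t, (t ∈ S ∧ T₀ - ε < t) ∧ γ t t ∈ Φ.source :=
    ((eventually_mem_nhdsWithin.and (eventually_nhdsWithin_of_eventually_nhds
      (Ioi_mem_nhds (by linarith)))).and (hx.eventually (Φ.open_source.mem_nhds hxΦ))).exists
  have htT₀ : t ≤ T₀ := le_csSup hS htS
  have hext := (hγ t htS).extend htS.1 Φ hΦ hγt (T := T₀ + ε / 2) fun r hr =>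
    hball r (by rw [Real.dist_eq, abs_lt]; constructor <;> linarith [hr.1, hr.2])
  linarith [le_csSup hS ⟨by linarith [htS.1], _, hext⟩]

theorem exists_continuousMap_lift_ray
    (hφ : ∀ x, ∃ e : E ≃L[ℝ] F, HasStrictFDerivAt φ (e : E →L[ℝ] F) x ∧
      ‖(e.symm : F →L[ℝ] E)‖ ≤ K)
    (x₀ : E) (v : F) : ∃ Γ : C(I, E), Γ 0 = x₀ ∧ ∀ t : I, φ (Γ t) = φ x₀ + (t : ℝ) • v := by
  obtain ⟨γ, hγc, hγ0, hγ⟩ := exists_isRayLift hφ x₀ v 1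
  exact ⟨⟨fun t => γ t, hγc.comp_continuous continuous_subtype_val Subtype.prop⟩, hγ0,
    fun t => hγ t t.2⟩

theorem surjective_of_hasStrictFDerivAt_of_norm_symm_le
    (hφ : ∀ x, ∃ e : E ≃L[ℝ] F, HasStrictFDerivAt φ (e : E →L[ℝ] F) x ∧
      ‖(e.symm : F →L[ℝ] E)‖ ≤ K) :
    Function.Surjective φ := fun y => by
  obtain ⟨Γ, -, hΓ⟩ := exists_continuousMap_lift_ray hφ 0 (y - φ 0)
  exact ⟨Γ 1, by simp [hΓ]⟩

theorem injective_of_hasStrictFDerivAt_of_norm_symm_le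
    (hφ : ∀ x, ∃ e : E ≃L[ℝ] F, HasStrictFDerivAt φ (e : E →L[ℝ] F) x ∧
      ‖(e.symm : F →L[ℝ] E)‖ ≤ K) :
    Function.Injective φ := by
  intro a b hab
  have hloc := isLocalHomeomorph_of_hasStrictFDerivAt fun x => (hφ x).imp fun _ => And.left
  have hsep := T2Space.isSeparatedMap φ
  have hφc := hloc.continuous
  set c : I → E := fun s => a + (s : ℝ) • (b - a)
  choose Γ hΓ0 hΓ using fun s => exists_continuousMap_lift_ray hφ (c s) (φ b - φ (c s))
  have hg : Continuous fun p : I × I => Γ p.2 p.1 :=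
    hloc.continuous_lift hsep ⟨fun p => φ (c p.2) + (p.1 : ℝ) • (φ b - φ (c p.2)),
      by fun_prop⟩ (funext fun p => hΓ p.2 p.1) (by simp only [hΓ0]; fun_prop)
      fun s => (Γ s).continuous
  have hend : Γ 0 1 = Γ 1 1 :=
    hsep.const_of_comp hloc.isLocallyInjective (hg.comp (Continuous.prodMk_right 1))
      (fun s s' => by simp [hΓ]) 0 1
  have hconst : ∀ s, φ (c s) = φ b → Γ s 1 = c s := fun s hs =>
    (hsep.const_of_comp hloc.isLocallyInjective (Γ s).continuous
      (fun t t' => by simp [hΓ, hs]) 1 0).trans (hΓ0 s)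
  calc a = c 0 := by simp [c]
    _ = c 1 := by rw [← hconst 0 (by simpa [c] using hab), hend, hconst 1 (by simp [c])]
    _ = b := by simp [c]

end Normed

theorem stmt10_general {E F : Type*} [NormedAddCommGroup E] [NormedSpace ℝ E] [CompleteSpace E]
    [NormedAddCommGroup F] [NormedSpace ℝ F]
    (φ : E → F) (hφ : ContDiff ℝ 1 φ) (K : ℝ)
    (h : ∀ x : E, ∃ e : E ≃L[ℝ] F, (e : E →L[ℝ] F) = fderiv ℝ φ x ∧
      ‖(e.symm : F →L[ℝ] E)‖ ≤ K) :
    Function.Surjective φ ∧ ∃ h : E ≃ₜ F, ⇑h = φ := by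
  have hstrict : ∀ x, ∃ e : E ≃L[ℝ] F, HasStrictFDerivAt φ (e : E →L[ℝ] F) x ∧
      ‖(e.symm : F →L[ℝ] E)‖ ≤ K := fun x => by
    obtain ⟨e, he, heK⟩ := h x
    exact ⟨e, he ▸ hφ.contDiffAt.hasStrictFDerivAt one_ne_zero, heK⟩
  have hloc := isLocalHomeomorph_of_hasStrictFDerivAt fun x => (hstrict x).imp fun _ => And.left
  have hsurj := surjective_of_hasStrictFDerivAt_of_norm_symm_le hstrict
  exact ⟨hsurj, hloc.toHomeomorphOfBijective
    ⟨injective_of_hasStrictFDerivAt_of_norm_symm_le hstrict, hsurj⟩, rfl⟩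

/-- Let `E`, `F` be Banach spaces and `φ ∈ FC¹(E,F)` such that `Dφ(x)` is
invertible (as a continuous linear map) for every `x` and `‖Dφ(x)⁻¹‖_op ≤ K` uniformly.
Then `φ` is a surjective homeomorphism from `E` onto `F`. -/
theorem stmt10 {E F : Type*} [NormedAddCommGroup E] [NormedSpace ℝ E] [CompleteSpace E]
    [NormedAddCommGroup F] [NormedSpace ℝ F] [CompleteSpace F]
    (φ : E → F) (hφ : ContDiff ℝ 1 φ) (K : ℝ)
    (h : ∀ x : E, ∃ e : E ≃L[ℝ] F, (e : E →L[ℝ] F) = fderiv ℝ φ x ∧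
      ‖(e.symm : F →L[ℝ] E)‖ ≤ K) :
    Function.Surjective φ ∧ ∃ h : E ≃ₜ F, ⇑h = φ :=
  stmt10_general φ hφ K h
end

section
/- Let X be a Banach space, W a set of weights on X containing 1_X, φ ∈ C^∞_W(X,X) with φ + id_X a diffeomorphism, ψ := (φ + id_X)^{-1} − id_X, and x ∈ X with ‖Dφ(x)‖_op < 1. Then Dψ((φ + id_X)(x)) = Dφ(x)·QI_{L(X,X)}(−Dφ(x)) − Dφ(x), where QI denotes the quasi-inversion in the Banach algebra L(X,X). -/
open Filter Topology Set
open scoped ENNReal NNReal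

noncomputable section

variable {X : Type*} [NormedAddCommGroup X] [NormedSpace ℝ X]

/-!
Differentiating `g ∘ (φ + id) = id` at `x` shows that `Dg((φ + id)(x))` is a left inverse of
`Dφ(x) + 1`. Since `‖Dφ(x)‖ < 1`, the Neumann series `Σ (-Dφ(x))ⁿ = 1 - QI(-Dφ(x))` is a
right inverse of `1 + Dφ(x)`, so the left inverse coincides with it and
`Dψ = Dg - 1 = -QI(-Dφ(x))`. The defining identity `a + QI(a) - a QI(a) = 0` of the
quasi-inverse, at `a = -Dφ(x)`, turns this into the claimed formula.
-/

section QuasiInverse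

variable {R : Type*} [NormedRing R] [HasSummableGeomSeries R]

/-- Quasi-inversion `QI(a) = -Σ_{k≥1} aᵏ`, with junk value `0` where the series diverges. -/
def quasiInv (a : R) : R := -∑' n : ℕ, a ^ (n + 1)

theorem one_sub_quasiInv {a : R} (ha : ‖a‖ < 1) : 1 - quasiInv a = ∑' n : ℕ, a ^ n := by
  rw [quasiInv, geom_series_succ a ha]
  abel

theorem one_sub_mul_one_sub_quasiInv {a : R} (ha : ‖a‖ < 1) :
    (1 - a) * (1 - quasiInv a) = 1 := by
  rw [one_sub_quasiInv ha, mul_neg_geom_series a ha]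

theorem eq_one_sub_quasiInv_of_mul_one_sub {a b : R} (ha : ‖a‖ < 1) (hb : b * (1 - a) = 1) :
    b = 1 - quasiInv a := by
  calc b = b * ((1 - a) * (1 - quasiInv a)) := by rw [one_sub_mul_one_sub_quasiInv ha, mul_one]
    _ = 1 - quasiInv a := by rw [← mul_assoc, hb, one_mul]

theorem add_quasiInv_sub_mul_quasiInv {a : R} (ha : ‖a‖ < 1) :
    a + quasiInv a - a * quasiInv a = 0 := by
  have h := one_sub_mul_one_sub_quasiInv ha
  simp only [sub_mul, mul_sub, one_mul, mul_one] at h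
  linear_combination (norm := abel) -h

end QuasiInverse

theorem Function.LeftInverse.hasFDerivAt_comp_eq_id {𝕜 E F : Type*} [NontriviallyNormedField 𝕜]
    [NormedAddCommGroup E] [NormedSpace 𝕜 E] [NormedAddCommGroup F] [NormedSpace 𝕜 F]
    {f : E → F} {g : F → E} {f' : E →L[𝕜] F} {g' : F →L[𝕜] E} {x : E}
    (hfg : Function.LeftInverse g f) (hf : HasFDerivAt f f' x) (hg : HasFDerivAt g g' (f x)) :
    g'.comp f' = ContinuousLinearMap.id 𝕜 E := by
  have hid : HasFDerivAt (g ∘ f) (ContinuousLinearMap.id 𝕜 E) x := by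
    rw [hfg.comp_eq_id]
    exact hasFDerivAt_id x
  exact (hg.comp x hf).unique hid

theorem stmt13_general [CompleteSpace X]
    (W : Set (X → EReal))
    (φ g : X → X) (hφ : MemCW Set.univ W (⊤ : ℕ∞) φ)
    (hg : ContDiff ℝ (⊤ : ℕ∞) g)
    (hgl : Function.LeftInverse g (fun x => φ x + x))
    (x : X) (hx : ‖fderiv ℝ φ x‖ < 1) :
    fderiv ℝ (fun y => g y - y) (φ x + x) =
      fderiv ℝ φ x * (-(∑' n : ℕ, (-(fderiv ℝ φ x)) ^ (n + 1))) - fderiv ℝ φ x := by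
  set A := fderiv ℝ φ x
  have hnA : ‖-A‖ < 1 := by rwa [norm_neg]
  have hF : HasFDerivAt (fun y => φ y + y) (A + 1) x :=
    ((contDiffOn_univ.mp hφ.1).differentiable (by simp) x).hasFDerivAt.add (hasFDerivAt_id x)
  have hG := (hg.differentiable (by simp) (φ x + x)).hasFDerivAt
  have hleft : fderiv ℝ g (φ x + x) * (1 - -A) = 1 := by
    rw [sub_neg_eq_add, add_comm (1 : X →L[ℝ] X)]
    exact hgl.hasFDerivAt_comp_eq_id hF hG
  have hψ : HasFDerivAt (fun y => g y - y) (fderiv ℝ g (φ x + x) - 1) (φ x + x) :=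
    hG.sub (hasFDerivAt_id _)
  rw [hψ.fderiv, eq_one_sub_quasiInv_of_mul_one_sub hnA hleft]
  have hQI := add_quasiInv_sub_mul_quasiInv hnA
  rw [neg_mul] at hQI
  change 1 - quasiInv (-A) - 1 = A * quasiInv (-A) - A
  linear_combination (norm := abel) -hQI

/-- Let `X` be a Banach space, `W` a set of weights on `X` containing `1_X`,
`φ ∈ C^∞_W(X,X)` with `φ + id_X` a diffeomorphism (with smooth inverse `g`),
`ψ := (φ + id_X)⁻¹ − id_X` and `x` with `‖Dφ(x)‖_op < 1`.  Then
`Dψ((φ + id_X)(x)) = Dφ(x)·QI(−Dφ(x)) − Dφ(x)`, where `QI(T) = −Σ_{k≥1} T^k` is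
quasi-inversion in the Banach algebra `L(X,X)`. -/
theorem stmt13 [CompleteSpace X]
    (W : Set (X → EReal)) (h1 : (fun _ : X => (1 : EReal)) ∈ W)
    (φ g : X → X) (hφ : MemCW Set.univ W (⊤ : ℕ∞) φ)
    (hg : ContDiff ℝ (⊤ : ℕ∞) g)
    (hgl : Function.LeftInverse g (fun x => φ x + x))
    (hgr : Function.RightInverse g (fun x => φ x + x))
    (x : X) (hx : ‖fderiv ℝ φ x‖ < 1) :
    fderiv ℝ (fun y => g y - y) (φ x + x) =
      fderiv ℝ φ x * (-(∑' n : ℕ, (-(fderiv ℝ φ x)) ^ (n + 1))) - fderiv ℝ φ x :=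
  stmt13_general W φ g hφ hg hgl x hx
end
end

section
/- There exists a bounded smooth function γ : ℝ → ℝ with all derivatives bounded, such that γ + id_ℝ is a diffeomorphism of ℝ, but the derivative of (γ + id_ℝ)^{-1} − id_ℝ is unbounded. Concretely, if φ is the antiderivative with φ(0)=0 of x ↦ (2/π)·arctan(x) and γ := sin∘φ, then γ has these properties. -/
/-!
Every derivative of `sin ∘ φ` lies in the algebra generated by `sin ∘ φ`, `cos ∘ φ`,
`φ' = (2/π) arctan`, `(1 + x²)⁻¹` and `x (1 + x²)⁻¹`: this algebra is closed under
differentiation and consists of bounded functions.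

The derivative `1 + cos (φ x) · φ' x` of `γ + id` is positive since `|φ'| < 1`, so `γ + id` is a
diffeomorphism. But `φ' x → -1` as `x → -∞`, while `φ x → +∞` there and hence passes through
every multiple of `2π`; at such points the derivative of `γ + id` is `1 + φ' x`, arbitrarily
close to `0`, and the derivative of the inverse is its reciprocal.
-/

open Real Filter Topology Set Function
open scoped ContDiff

def boundedFunctions : Subalgebra ℝ (ℝ → ℝ) where
  carrier := {f | ∃ C, ∀ x, |f x| ≤ C}
  mul_mem' := by
    rintro f g ⟨C, hC⟩ ⟨D, hD⟩
    refine ⟨C * D, fun x => ?_⟩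
    rw [Pi.mul_apply, abs_mul]
    exact mul_le_mul (hC x) (hD x) (abs_nonneg _) ((abs_nonneg _).trans (hC x))
  add_mem' := by
    rintro f g ⟨C, hC⟩ ⟨D, hD⟩
    exact ⟨C + D, fun x => (abs_add_le _ _).trans (add_le_add (hC x) (hD x))⟩
  algebraMap_mem' c := ⟨|c|, fun _ => le_rfl⟩

section AdjoinClosedUnderDeriv

variable {S : Set (ℝ → ℝ)}
  (hS : ∀ f ∈ S, ∃ f' ∈ Algebra.adjoin ℝ S, ∀ x, HasDerivAt f (f' x) x)
include hS

theorem differentiable_and_deriv_mem_adjoin {f : ℝ → ℝ} (hf : f ∈ Algebra.adjoin ℝ S) :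
    Differentiable ℝ f ∧ deriv f ∈ Algebra.adjoin ℝ S := by
  induction hf using Algebra.adjoin_induction with
  | mem f hf =>
    obtain ⟨f', hf', hderiv⟩ := hS f hf
    exact ⟨fun x => (hderiv x).differentiableAt, (funext fun x => (hderiv x).deriv) ▸ hf'⟩
  | algebraMap c =>
    refine ⟨differentiable_const c, ?_⟩
    rw [show deriv (algebraMap ℝ (ℝ → ℝ) c) = 0 from funext fun x => deriv_const x c]
    exact zero_mem _
  | add f g _ _ hf hg =>
    refine ⟨hf.1.add hg.1, ?_⟩
    rw [show deriv (f + g) = deriv f + deriv g from funext fun x => deriv_add (hf.1 x) (hg.1 x)]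
    exact add_mem hf.2 hg.2
  | mul f g hf' hg' hf hg =>
    refine ⟨hf.1.mul hg.1, ?_⟩
    rw [show deriv (f * g) = deriv f * g + f * deriv g from
      funext fun x => deriv_mul (hf.1 x) (hg.1 x)]
    exact add_mem (mul_mem hf.2 hg') (mul_mem hf' hg.2)

theorem iteratedDeriv_mem_adjoin (n : ℕ) {f : ℝ → ℝ} (hf : f ∈ Algebra.adjoin ℝ S) :
    iteratedDeriv n f ∈ Algebra.adjoin ℝ S := by
  induction n with
  | zero => rwa [iteratedDeriv_zero]
  | succ n ih =>
    rw [iteratedDeriv_succ]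
    exact (differentiable_and_deriv_mem_adjoin hS ih).2

theorem bounded_iteratedDeriv_of_mem_adjoin (hbdd : S ⊆ boundedFunctions) (n : ℕ) {f : ℝ → ℝ}
    (hf : f ∈ Algebra.adjoin ℝ S) : ∃ C, ∀ x, |iteratedDeriv n f x| ≤ C :=
  Algebra.adjoin_le hbdd (iteratedDeriv_mem_adjoin hS n hf)

end AdjoinClosedUnderDeriv

theorem hasDerivAt_inv_one_add_sq (x : ℝ) :
    HasDerivAt (fun x : ℝ => (1 + x ^ 2)⁻¹) (-2 * (x * (1 + x ^ 2)⁻¹ * (1 + x ^ 2)⁻¹)) x := by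
  refine (((hasDerivAt_pow 2 x).const_add 1).inv (by positivity)).congr_deriv ?_
  field_simp
  norm_num
  ring

theorem hasDerivAt_mul_inv_one_add_sq (x : ℝ) :
    HasDerivAt (fun x : ℝ => x * (1 + x ^ 2)⁻¹)
      ((1 + x ^ 2)⁻¹ - 2 * (x * (1 + x ^ 2)⁻¹ * (x * (1 + x ^ 2)⁻¹))) x := by
  refine ((hasDerivAt_id' x).mul (hasDerivAt_inv_one_add_sq x)).congr_deriv ?_
  ring

theorem abs_inv_one_add_sq_le_one (x : ℝ) : |(1 + x ^ 2)⁻¹| ≤ 1 := by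
  rw [abs_of_pos (by positivity)]
  exact inv_le_one_of_one_le₀ (by nlinarith [sq_nonneg x])

theorem abs_mul_inv_one_add_sq_le_one (x : ℝ) : |x * (1 + x ^ 2)⁻¹| ≤ 1 := by
  rw [abs_mul, abs_of_pos (by positivity : (0 : ℝ) < (1 + x ^ 2)⁻¹), ← div_eq_mul_inv,
    div_le_one (by positivity)]
  nlinarith [sq_abs x, abs_nonneg x]

noncomputable def scaledArctan (x : ℝ) : ℝ := 2 / π * arctan x

theorem continuous_scaledArctan : Continuous scaledArctan :=
  continuous_const.mul continuous_arctan

theorem hasDerivAt_scaledArctan (x : ℝ) :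
    HasDerivAt scaledArctan (2 / π * (1 + x ^ 2)⁻¹) x :=
  (hasDerivAt_arctan' x).const_mul _

theorem abs_scaledArctan_lt_one (x : ℝ) : |scaledArctan x| < 1 := by
  rw [scaledArctan, abs_mul, abs_of_pos (by positivity : (0 : ℝ) < 2 / π),
    ← lt_div_iff₀' (by positivity), one_div_div, abs_lt]
  exact ⟨neg_pi_div_two_lt_arctan x, arctan_lt_pi_div_two x⟩

theorem tendsto_scaledArctan_atBot : Tendsto scaledArctan atBot (𝓝 (-1)) := by
  have h := (tendsto_nhds_of_tendsto_nhdsWithin tendsto_arctan_atBot).const_mul (2 / π)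
  rwa [show 2 / π * -(π / 2) = -1 by field_simp] at h

theorem tendsto_atBot_atTop_of_eventually_deriv_le {f f' : ℝ → ℝ} {c : ℝ} (hc : 0 < c)
    (hf : ∀ x, HasDerivAt f (f' x) x) (hf' : ∀ᶠ x in atBot, f' x ≤ -c) :
    Tendsto f atBot atTop := by
  obtain ⟨a, ha⟩ := eventually_atBot.1 hf'
  have hdiff : Differentiable ℝ f := fun x => (hf x).differentiableAt
  have hlin : ∀ x ≤ a, f a + c * (a - x) ≤ f x := by
    intro x hx
    have := (convex_Iic a).image_sub_le_mul_sub_of_deriv_le hdiff.continuous.continuousOn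
      hdiff.differentiableOn (fun y hy => by
        rw [interior_Iic] at hy
        exact (hf y).deriv ▸ ha y hy.le) x hx a self_mem_Iic hx
    linarith
  refine tendsto_atBot_atTop.2 fun b => ⟨min a (a - (b - f a) / c), fun x hx => ?_⟩
  have hxb : (b - f a) / c ≤ a - x := by linarith [min_le_right a (a - (b - f a) / c)]
  have := hlin x (hx.trans (min_le_left _ _))
  rw [div_le_iff₀ hc] at hxb
  linarith

theorem exists_le_cos_eq_one_of_tendsto {f : ℝ → ℝ} (hf : Continuous f)
    (htop : Tendsto f atBot atTop) (y₀ : ℝ) : ∃ y ≤ y₀, cos (f y) = 1 := by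
  obtain ⟨k, hk⟩ := exists_nat_ge (f y₀ / (2 * π))
  have hk' : f y₀ ≤ k * (2 * π) := (div_le_iff₀ (by positivity)).1 hk
  obtain ⟨y₁, hy₁, hy₁le⟩ := ((htop.eventually_ge_atTop (k * (2 * π))).and
    (eventually_le_atBot y₀)).exists
  obtain ⟨y, hy, hfy⟩ := intermediate_value_Icc' hy₁le hf.continuousOn ⟨hk', hy₁⟩
  exact ⟨y, hy.2, hfy ▸ cos_nat_mul_two_pi k⟩

theorem surjective_add_id_of_bounded {γ : ℝ → ℝ} (hγ : Continuous γ) {C : ℝ}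
    (hC : ∀ x, |γ x| ≤ C) : Surjective fun x => γ x + x :=
  (hγ.add continuous_id).surjective
    (tendsto_atTop_add_left_of_le _ (-C) (fun x => (abs_le.1 (hC x)).1) tendsto_id)
    (tendsto_atBot_add_left_of_ge _ C (fun x => (abs_le.1 (hC x)).2) tendsto_id)

theorem exists_contDiff_inverse_of_deriv_pos {n : WithTop ℕ∞} {F F' : ℝ → ℝ}
    (hF : ContDiff ℝ n F) (hF' : ∀ x, HasDerivAt F (F' x) x) (hpos : ∀ x, 0 < F' x)
    (hsurj : Surjective F) :
    ∃ g : ℝ → ℝ, ContDiff ℝ n g ∧ LeftInverse g F ∧ RightInverse g F ∧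
      ∀ x, HasDerivAt g (F' (g x))⁻¹ x := by
  have hmono : StrictMono F := strictMono_of_deriv_pos fun x => (hF' x).deriv ▸ hpos x
  let e : ℝ ≃ₜ ℝ := (hmono.orderIsoOfSurjective F hsurj).toHomeomorph
  have he : ⇑e = F := hmono.coe_orderIsoOfSurjective F hsurj
  refine ⟨e.symm, e.contDiff_symm_deriv (fun x => (hpos x).ne') (he ▸ hF') (he ▸ hF),
    fun x => he ▸ e.symm_apply_apply x, fun y => he ▸ e.apply_symm_apply y, fun y => ?_⟩
  exact HasDerivAt.of_local_left_inverse e.symm.continuous.continuousAt (hF' _) (hpos _).ne'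
    (Eventually.of_forall fun z => he ▸ e.apply_symm_apply z)

theorem not_bounded_deriv_sub_id {g F F' : ℝ → ℝ} (hleft : LeftInverse g F)
    (hg : ∀ x, HasDerivAt g (F' (g x))⁻¹ x) (hsmall : ∀ ε > 0, ∃ y, 0 < F' y ∧ F' y < ε) :
    ¬ ∃ C, ∀ x, |deriv (fun y => g y - y) x| ≤ C := by
  rintro ⟨C, hC⟩
  have hC0 : 0 < C + 1 := by linarith [(abs_nonneg _).trans (hC 0)]
  obtain ⟨y, hy0, hy⟩ := hsmall (C + 1)⁻¹ (inv_pos.2 hC0)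
  have hderiv : deriv (fun x => g x - x) (F y) = (F' y)⁻¹ - 1 := by
    simpa only [hleft y] using ((hg (F y)).fun_sub (hasDerivAt_id' (F y))).deriv
  have hlarge : C + 1 < (F' y)⁻¹ := by
    rwa [lt_inv_comm₀ hC0 hy0]
  have hbound := hC (F y)
  rw [hderiv] at hbound
  linarith [le_abs_self ((F' y)⁻¹ - 1)]

theorem one_add_cos_mul_scaledArctan_pos (a x : ℝ) : 0 < 1 + cos a * scaledArctan x := by
  have h : |cos a * scaledArctan x| < 1 := by
    rw [abs_mul]
    exact mul_lt_one_of_nonneg_of_lt_one_right (abs_cos_le_one a) (abs_nonneg _)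
      (abs_scaledArctan_lt_one x)
  linarith [neg_abs_le (cos a * scaledArctan x)]

section Antiderivative

variable {φ : ℝ → ℝ} (hφ : ∀ x, HasDerivAt φ (scaledArctan x) x)
include hφ

theorem contDiff_of_hasDerivAt_scaledArctan : ContDiff ℝ ∞ φ := by
  have hderiv : deriv φ = scaledArctan := funext fun x => (hφ x).deriv
  exact contDiff_infty_iff_deriv.2 ⟨fun x => (hφ x).differentiableAt,
    hderiv ▸ contDiff_const.mul contDiff_arctan⟩

theorem bounded_iteratedDeriv_sin_comp (n : ℕ) :
    ∃ C, ∀ x, |iteratedDeriv n (sin ∘ φ) x| ≤ C := by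
  let S : Set (ℝ → ℝ) := {sin ∘ φ, cos ∘ φ, scaledArctan, fun x => (1 + x ^ 2)⁻¹,
    fun x => x * (1 + x ^ 2)⁻¹}
  have hsin : sin ∘ φ ∈ Algebra.adjoin ℝ S := Algebra.subset_adjoin (by simp [S])
  have hcos : cos ∘ φ ∈ Algebra.adjoin ℝ S := Algebra.subset_adjoin (by simp [S])
  have harctan : scaledArctan ∈ Algebra.adjoin ℝ S := Algebra.subset_adjoin (by simp [S])
  have hr : (fun x : ℝ => (1 + x ^ 2)⁻¹) ∈ Algebra.adjoin ℝ S :=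
    Algebra.subset_adjoin (by simp [S])
  have hs : (fun x : ℝ => x * (1 + x ^ 2)⁻¹) ∈ Algebra.adjoin ℝ S :=
    Algebra.subset_adjoin (by simp [S])
  refine bounded_iteratedDeriv_of_mem_adjoin ?_ ?_ n hsin
  · rintro f (rfl | rfl | rfl | rfl | rfl)
    · exact ⟨_, mul_mem hcos harctan, fun x => (hasDerivAt_sin (φ x)).comp x (hφ x)⟩
    · refine ⟨_, neg_mem (mul_mem hsin harctan), fun x => ?_⟩
      exact ((hasDerivAt_cos (φ x)).comp x (hφ x)).congr_deriv (neg_mul _ _)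
    · exact ⟨_, Subalgebra.smul_mem _ hr (2 / π), hasDerivAt_scaledArctan⟩
    · exact ⟨_, Subalgebra.smul_mem _ (mul_mem hs hr) (-2), hasDerivAt_inv_one_add_sq⟩
    · exact ⟨_, sub_mem hr (Subalgebra.smul_mem _ (mul_mem hs hs) 2),
        hasDerivAt_mul_inv_one_add_sq⟩
  · rintro f (rfl | rfl | rfl | rfl | rfl)
    · exact ⟨1, fun x => abs_sin_le_one _⟩
    · exact ⟨1, fun x => abs_cos_le_one _⟩
    · exact ⟨1, fun x => (abs_scaledArctan_lt_one x).le⟩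
    · exact ⟨1, abs_inv_one_add_sq_le_one⟩
    · exact ⟨1, abs_mul_inv_one_add_sq_le_one⟩

theorem tendsto_atBot_atTop_of_hasDerivAt_scaledArctan : Tendsto φ atBot atTop :=
  tendsto_atBot_atTop_of_eventually_deriv_le one_half_pos hφ
    ((tendsto_scaledArctan_atBot.eventually_lt_const (by norm_num)).mono fun _ h => h.le)

theorem exists_one_add_cos_mul_scaledArctan_lt {ε : ℝ} (hε : 0 < ε) :
    ∃ y, 1 + cos (φ y) * scaledArctan y < ε := by
  obtain ⟨y₀, hy₀⟩ := eventually_atBot.1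
    (tendsto_scaledArctan_atBot.eventually_lt_const (show -1 < ε - 1 by linarith))
  obtain ⟨y, hy, hcos⟩ := exists_le_cos_eq_one_of_tendsto
    (contDiff_of_hasDerivAt_scaledArctan hφ).continuous
    (tendsto_atBot_atTop_of_hasDerivAt_scaledArctan hφ) y₀
  exact ⟨y, by linarith [hy₀ y hy, hcos ▸ one_mul (scaledArctan y)]⟩

end Antiderivative

/-- There is a smooth function `γ : ℝ → ℝ`, bounded together with all its
derivatives, such that `γ + id_ℝ` is a diffeomorphism of `ℝ` whereas the derivative of
`(γ + id_ℝ)⁻¹ − id_ℝ` is unbounded; concretely `γ = sin ∘ φ`, where `φ` is the antiderivative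
of `x ↦ (2/π)·arctan x` vanishing at `0`. -/
theorem stmt15 (φ γ : ℝ → ℝ)
    (hφ : φ = fun x : ℝ => ∫ t in (0 : ℝ)..x, (2 / Real.pi) * Real.arctan t)
    (hγ : γ = Real.sin ∘ φ) :
    ContDiff ℝ (⊤ : ℕ∞) γ ∧
    (∀ n : ℕ, ∃ C : ℝ, ∀ x, |iteratedDeriv n γ x| ≤ C) ∧
    ∃ g : ℝ → ℝ, ContDiff ℝ (⊤ : ℕ∞) g ∧
      Function.LeftInverse g (fun x => γ x + x) ∧
      Function.RightInverse g (fun x => γ x + x) ∧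
      ¬ ∃ C : ℝ, ∀ x, |deriv (fun y => g y - y) x| ≤ C := by
  have hφ' : ∀ x, HasDerivAt φ (scaledArctan x) x := fun x => by
    rw [hφ]
    exact (continuous_scaledArctan.integral_hasStrictDerivAt 0 x).hasDerivAt
  subst hγ
  have hγ' : ∀ x, HasDerivAt (fun x => (sin ∘ φ) x + x) (1 + cos (φ x) * scaledArctan x) x :=
    fun x => (((hasDerivAt_sin (φ x)).comp x (hφ' x)).add (hasDerivAt_id' x)).congr_deriv
      (add_comm _ _)
  have hγs : ContDiff ℝ ∞ (sin ∘ φ) := contDiff_sin.comp (contDiff_of_hasDerivAt_scaledArctan hφ')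
  obtain ⟨g, hg, hleft, hright, hg'⟩ := exists_contDiff_inverse_of_deriv_pos
    (hγs.add contDiff_id) hγ' (fun x => one_add_cos_mul_scaledArctan_pos _ _)
    (surjective_add_id_of_bounded hγs.continuous fun x => abs_sin_le_one (φ x))
  refine ⟨hγs, bounded_iteratedDeriv_sin_comp hφ', g, hg, hleft, hright,
    not_bounded_deriv_sub_id (F' := fun y => 1 + cos (φ y) * scaledArctan y) hleft hg'
      fun ε hε => ?_⟩
  obtain ⟨y, hy⟩ := exists_one_add_cos_mul_scaledArctan_lt hφ' hε
  exact ⟨y, one_add_cos_mul_scaledArctan_pos _ _, hy⟩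
end
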